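/- Let d be a positive integer, m ∈ ℕ^d, p_B ∈ [1,∞), and E a normed vector space. Let H : [0,1]^d → E be constant on each cell of the anisotropic dyadic partition Π_m and satisfy ‖H(w)‖ ≤ 1 for all w. Then there is a constant C depending only on d and p_B such that for every coordinate j ∈ {1,…,d} and every τ ∈ (0,1]: ∫_{{w ∈ [0,1]^d : w + τe_j ∈ [0,1]^d}} ‖H(w + τe_j) − H(w)‖^{p_B} dw ≤ C · min{1, 2^{m_j} τ}. Consequently, for any s_j with 0 < s_j < 1/p_B, sup_{0 < τ ≤ 1} τ^{−s_j} ( ∫_{{w : w+τe_j ∈ [0,1]^d}} ‖H(w+τe_j) − H(w)‖^{p_B} dw )^{1/p_B} ≤ C′ · 2^{m_j s_j}, where C′ depends only on d, p_B, s_j. -/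

import Mathlib

open MeasureTheory
open scoped ENNReal

/-!
STATEMENT 11: Stepwise critics are anisotropic Besov–Nikolskii critics.
If `H : [0,1]^d → E` is constant on each cell of the anisotropic dyadic partition
`Π_m` and `‖H(w)‖ ≤ 1` on the cube, then for a constant `C = C(d, p_B)`,
`∫_{w, w+τe_j ∈ [0,1]^d} ‖H(w+τe_j) − H(w)‖^{p_B} dw ≤ C · min{1, 2^{m_j} τ}` for all
`τ ∈ (0,1]`, and consequently for `0 < s < 1/p_B`,
`τ^{−s} (∫ …)^{1/p_B} ≤ C' · 2^{m_j s}` uniformly over `τ ∈ (0,1]`, with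
`C' = C'(d, p_B, s)`.
-/

noncomputable def dyI (m k : ℕ) : Set ℝ :=
  if k + 1 = 2 ^ m then Set.Icc ((k : ℝ) / 2 ^ m) 1
  else Set.Ico ((k : ℝ) / 2 ^ m) (((k : ℝ) + 1) / 2 ^ m)

noncomputable def dyCell {d : ℕ} (m : Fin d → ℕ) (k : ∀ j, Fin (2 ^ m j)) :
    Set (Fin d → ℝ) :=
  {w | ∀ j, w j ∈ dyI (m j) (k j)}

/-- Translation by `τ` in coordinate `j`: `w ↦ w + τ e_j`. -/
def shiftCoord {d : ℕ} (j : Fin d) (τ : ℝ) (w : Fin d → ℝ) : Fin d → ℝ :=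
  fun i => if i = j then w i + τ else w i

/-! `H (w + τ e_j) - H w` vanishes unless `[w_j, w_j + τ]` contains one of the `2 ^ m_j - 1`
interior breakpoints `k / 2 ^ m_j`, and its norm is at most `2` anyway. The `w_j` for which a
breakpoint is crossed form a set of length at most `2 ^ m_j τ`, which gives the first bound with
`C = 2 ^ p_B`. Since `s < 1 / p_B` and `min 1 x ≤ 1`, `(min 1 x) ^ (1 / p_B) ≤ x ^ s`, which gives
the second bound with `C' = 2`. -/

open Set

/-- Clamped at `2 ^ m - 1` so that `x = 1` lies in the last, closed, dyadic interval. -/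
noncomputable def dyadicIndex (m : ℕ) (x : ℝ) : ℕ := min ⌊(2 : ℝ) ^ m * x⌋₊ (2 ^ m - 1)

lemma dyadicIndex_lt (m : ℕ) (x : ℝ) : dyadicIndex m x < 2 ^ m :=
  (min_le_right _ _).trans_lt (Nat.sub_lt (Nat.two_pow_pos m) one_pos)

lemma dyadicIndex_mono (m : ℕ) : Monotone (dyadicIndex m) := fun _ _ hxy =>
  min_le_min_right _ (Nat.floor_mono (mul_le_mul_of_nonneg_left hxy (by positivity)))

lemma div_two_pow_le_of_le_dyadicIndex {m k : ℕ} {x : ℝ} (hx : 0 ≤ x)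
    (hk : k ≤ dyadicIndex m x) : (k : ℝ) / 2 ^ m ≤ x := by
  have hfloor : (k : ℝ) ≤ (2 : ℝ) ^ m * x :=
    (Nat.cast_le.2 (hk.trans (min_le_left _ _))).trans (Nat.floor_le (by positivity))
  rw [div_le_iff₀ (by positivity)]
  linarith

lemma lt_div_two_pow_of_dyadicIndex_lt {m k : ℕ} {x : ℝ} (hk : dyadicIndex m x < k)
    (hk' : k < 2 ^ m) : x < (k : ℝ) / 2 ^ m := by
  have hfloor : ⌊(2 : ℝ) ^ m * x⌋₊ < k := by
    unfold dyadicIndex at hk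
    omega
  rw [lt_div_iff₀ (by positivity)]
  linarith [Nat.lt_of_floor_lt hfloor]

lemma mem_dyI_dyadicIndex {m : ℕ} {x : ℝ} (hx : x ∈ Icc (0 : ℝ) 1) :
    x ∈ dyI m (dyadicIndex m x) := by
  have hlow : (dyadicIndex m x : ℝ) / 2 ^ m ≤ x :=
    div_two_pow_le_of_le_dyadicIndex hx.1 le_rfl
  unfold dyI
  split_ifs with hlast
  · exact ⟨hlow, hx.2⟩
  · have hnext : dyadicIndex m x + 1 < 2 ^ m := by
      have := dyadicIndex_lt m x
      omega
    exact ⟨hlow, by exact_mod_cast lt_div_two_pow_of_dyadicIndex_lt (Nat.lt_succ_self _) hnext⟩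

/-- The points `x` for which `[x, x + τ]` reaches past an interior breakpoint `k / 2 ^ m`. -/
noncomputable def dyadicCrossing (m : ℕ) (τ : ℝ) : Set ℝ :=
  ⋃ k ∈ (Finset.Ico 1 (2 ^ m) : Finset ℕ), Ico ((k : ℝ) / 2 ^ m - τ) ((k : ℝ) / 2 ^ m)

lemma measurableSet_dyadicCrossing (m : ℕ) (τ : ℝ) : MeasurableSet (dyadicCrossing m τ) :=
  Finset.measurableSet_biUnion _ fun _ _ => measurableSet_Ico

lemma volume_dyadicCrossing_le (m : ℕ) (τ : ℝ) :
    volume (dyadicCrossing m τ) ≤ ENNReal.ofReal ((2 : ℝ) ^ m * τ) := by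
  calc volume (dyadicCrossing m τ)
      ≤ ∑ k ∈ (Finset.Ico 1 (2 ^ m) : Finset ℕ),
          volume (Ico ((k : ℝ) / 2 ^ m - τ) ((k : ℝ) / 2 ^ m)) :=
        measure_biUnion_finset_le _ _
    _ = (2 ^ m - 1 : ℕ) * ENNReal.ofReal τ := by
        simp [Real.volume_Ico]
    _ ≤ (2 ^ m : ℕ) * ENNReal.ofReal τ := by gcongr; exact Nat.sub_le _ _
    _ = ENNReal.ofReal ((2 : ℝ) ^ m * τ) := by
        rw [ENNReal.ofReal_mul (by positivity), ← ENNReal.ofReal_natCast]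
        norm_num

lemma dyadicIndex_add_eq {m : ℕ} {x τ : ℝ} (hτ : 0 ≤ τ) (hx : 0 ≤ x)
    (hx' : x ∉ dyadicCrossing m τ) : dyadicIndex m (x + τ) = dyadicIndex m x := by
  refine ((dyadicIndex_mono m (le_add_of_nonneg_right hτ)).eq_or_lt.resolve_right ?_).symm
  intro hlt
  set k := dyadicIndex m (x + τ)
  have hk : k < 2 ^ m := dyadicIndex_lt m (x + τ)
  have hk_le : (k : ℝ) / 2 ^ m ≤ x + τ :=
    div_two_pow_le_of_le_dyadicIndex (by linarith) le_rfl
  have hx_lt : x < (k : ℝ) / 2 ^ m := lt_div_two_pow_of_dyadicIndex_lt hlt hk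
  exact hx' (mem_biUnion (Finset.mem_Ico.2 ⟨Nat.one_le_of_lt hlt, hk⟩) ⟨by linarith, hx_lt⟩)

lemma mem_dyCell_dyadicIndex {d : ℕ} (m : Fin d → ℕ) {w : Fin d → ℝ}
    (hw : ∀ i, w i ∈ Icc (0 : ℝ) 1) :
    w ∈ dyCell m (fun i => ⟨dyadicIndex (m i) (w i), dyadicIndex_lt _ _⟩) :=
  fun i => mem_dyI_dyadicIndex (hw i)

lemma shiftCoord_apply_same {d : ℕ} (j : Fin d) (τ : ℝ) (w : Fin d → ℝ) :
    shiftCoord j τ w j = w j + τ := if_pos rfl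

lemma shiftCoord_apply_of_ne {d : ℕ} {i j : Fin d} (h : i ≠ j) (τ : ℝ) (w : Fin d → ℝ) :
    shiftCoord j τ w i = w i := if_neg h

lemma measurable_shiftCoord {d : ℕ} (j : Fin d) (τ : ℝ) : Measurable (shiftCoord j τ) :=
  measurable_pi_lambda _ fun i => by
    unfold shiftCoord
    split_ifs
    · exact (measurable_pi_apply i).add_const _
    · exact measurable_pi_apply i

lemma apply_shiftCoord_eq {d : ℕ} {E : Type*} {m : Fin d → ℕ} {H : (Fin d → ℝ) → E}
    (hH : ∀ k : (∀ j, Fin (2 ^ m j)), ∀ w ∈ dyCell m k, ∀ w' ∈ dyCell m k, H w = H w')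
    {j : Fin d} {τ : ℝ} (hτ : 0 ≤ τ) {w : Fin d → ℝ} (hw : ∀ i, w i ∈ Icc (0 : ℝ) 1)
    (hw' : ∀ i, shiftCoord j τ w i ∈ Icc (0 : ℝ) 1) (hwj : w j ∉ dyadicCrossing (m j) τ) :
    H (shiftCoord j τ w) = H w := by
  have hcell : shiftCoord j τ w ∈
      dyCell m (fun i => ⟨dyadicIndex (m i) (w i), dyadicIndex_lt _ _⟩) := by
    intro i
    have hshift := mem_dyCell_dyadicIndex m hw' i
    by_cases hij : i = j
    · subst hij
      simpa only [shiftCoord_apply_same, dyadicIndex_add_eq hτ (hw i).1 hwj] using hshift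
    · simpa only [shiftCoord_apply_of_ne hij] using hshift
  exact hH _ _ hcell _ (mem_dyCell_dyadicIndex m hw)

lemma measurableSet_unitCube (d : ℕ) :
    MeasurableSet {w : Fin d → ℝ | ∀ i, w i ∈ Icc (0 : ℝ) 1} := by
  measurability

lemma volume_le_of_subset_unitCube_eval_preimage {d : ℕ} (j : Fin d) {A : Set ℝ}
    {T : Set (Fin d → ℝ)} (hT : ∀ w ∈ T, (∀ i, w i ∈ Icc (0 : ℝ) 1) ∧ w j ∈ A) :
    volume T ≤ volume A := by
  have hsub : T ⊆ univ.pi (Function.update (fun _ => Icc (0 : ℝ) 1) j A) := by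
    intro w hw i _
    by_cases hij : i = j
    · subst hij; simpa using (hT w hw).2
    · simpa [hij] using (hT w hw).1 i
  calc volume T ≤ volume (univ.pi (Function.update (fun _ => Icc (0 : ℝ) 1) j A)) :=
        measure_mono hsub
    _ = volume A := by
      rw [volume_pi_pi, Finset.prod_congr rfl fun i _ =>
        Function.apply_update (fun _ s => volume s) _ j A i,
        Finset.prod_update_of_mem (Finset.mem_univ j)]
      simp

lemma setIntegral_le_mul_measureReal_of_le_indicator {X : Type*} [MeasurableSpace X]
    {μ : Measure X} {S A : Set X} {f : X → ℝ} {c : ℝ} (hS : MeasurableSet S)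
    (hA : MeasurableSet A) (hμS : μ S ≠ ∞) (hf0 : ∀ x ∈ S, 0 ≤ f x)
    (hf : ∀ x ∈ S, f x ≤ A.indicator (fun _ => c) x) :
    ∫ x in S, f x ∂μ ≤ c * μ.real (A ∩ S) := by
  have hint : Integrable (A.indicator fun _ => c) (μ.restrict S) :=
    (integrableOn_const hμS).indicator hA
  calc ∫ x in S, f x ∂μ ≤ ∫ x in S, A.indicator (fun _ => c) x ∂μ :=
        integral_mono_of_nonneg ((ae_restrict_iff' hS).2 (.of_forall hf0)) hint
          ((ae_restrict_iff' hS).2 (.of_forall hf))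
    _ = c * μ.real (A ∩ S) := by
        rw [integral_indicator hA, setIntegral_const, measureReal_restrict_apply hA, smul_eq_mul,
          mul_comm]

lemma setIntegral_norm_shiftCoord_sub_rpow_le {d : ℕ} {E : Type*} [NormedAddCommGroup E]
    {p : ℝ} (hp : 0 < p) {m : Fin d → ℕ} {H : (Fin d → ℝ) → E}
    (hH : ∀ k : (∀ j, Fin (2 ^ m j)), ∀ w ∈ dyCell m k, ∀ w' ∈ dyCell m k, H w = H w')
    (hbd : ∀ w : Fin d → ℝ, (∀ i, w i ∈ Icc (0 : ℝ) 1) → ‖H w‖ ≤ 1)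
    (j : Fin d) {τ : ℝ} (hτ : 0 ≤ τ) :
    (∫ w in {w : Fin d → ℝ | (∀ i, w i ∈ Icc (0 : ℝ) 1) ∧
        (∀ i, shiftCoord j τ w i ∈ Icc (0 : ℝ) 1)}, ‖H (shiftCoord j τ w) - H w‖ ^ p)
      ≤ 2 ^ p * min 1 ((2 : ℝ) ^ m j * τ) := by
  set S := {w : Fin d → ℝ | (∀ i, w i ∈ Icc (0 : ℝ) 1) ∧
    (∀ i, shiftCoord j τ w i ∈ Icc (0 : ℝ) 1)}
  set A : Set (Fin d → ℝ) := {w | w j ∈ dyadicCrossing (m j) τ}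
  have hS : MeasurableSet S :=
    (measurableSet_unitCube d).inter (measurable_shiftCoord j τ (measurableSet_unitCube d))
  have hA : MeasurableSet A := measurable_pi_apply j (measurableSet_dyadicCrossing _ _)
  have hS_vol : volume S ≤ 1 := by
    calc volume S ≤ volume (Icc (0 : ℝ) 1) :=
          volume_le_of_subset_unitCube_eval_preimage j fun w hw => ⟨hw.1, hw.1 j⟩
      _ = 1 := by simp
  have hAS_vol : volume (A ∩ S) ≤ ENNReal.ofReal ((2 : ℝ) ^ m j * τ) :=
    (volume_le_of_subset_unitCube_eval_preimage j fun w hw => ⟨hw.2.1, hw.1⟩).trans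
      (volume_dyadicCrossing_le _ _)
  have hAS_real : volume.real (A ∩ S) ≤ min 1 ((2 : ℝ) ^ m j * τ) :=
    le_min (ENNReal.toReal_le_of_le_ofReal zero_le_one
        (by simpa using (measure_mono inter_subset_right).trans hS_vol))
      (ENNReal.toReal_le_of_le_ofReal (by positivity) hAS_vol)
  have hf : ∀ w ∈ S, ‖H (shiftCoord j τ w) - H w‖ ^ p ≤ A.indicator (fun _ => 2 ^ p) w := by
    intro w hw
    by_cases hwA : w ∈ A
    · rw [indicator_of_mem hwA]
      gcongr
      calc ‖H (shiftCoord j τ w) - H w‖ ≤ ‖H (shiftCoord j τ w)‖ + ‖H w‖ := norm_sub_le _ _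
        _ ≤ 2 := by linarith [hbd _ hw.2, hbd _ hw.1]
    · rw [indicator_of_notMem hwA, apply_shiftCoord_eq hH hτ hw.1 hw.2 hwA, sub_self, norm_zero,
        Real.zero_rpow hp.ne']
  calc _ ≤ 2 ^ p * volume.real (A ∩ S) :=
        setIntegral_le_mul_measureReal_of_le_indicator hS hA (hS_vol.trans_lt ENNReal.one_lt_top).ne
          (fun _ _ => by positivity) hf
    _ ≤ 2 ^ p * min 1 ((2 : ℝ) ^ m j * τ) := by gcongr

lemma rpow_neg_mul_rpow_one_div_le {p s c N τ I : ℝ} (hp : 0 < p) (hs : 0 < s) (hsp : s < 1 / p)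
    (hc : 0 ≤ c) (hN : 0 < N) (hτ : 0 < τ) (hI0 : 0 ≤ I) (hI : I ≤ c ^ p * min 1 (N * τ)) :
    τ ^ (-s) * I ^ (1 / p) ≤ c * N ^ s := by
  set M := min 1 (N * τ)
  have hM0 : 0 < M := lt_min one_pos (by positivity)
  calc τ ^ (-s) * I ^ (1 / p) ≤ τ ^ (-s) * (c ^ p * M) ^ (1 / p) := by gcongr
    _ = τ ^ (-s) * (c * M ^ (1 / p)) := by
        rw [Real.mul_rpow (by positivity) hM0.le, ← Real.rpow_mul hc, mul_one_div_cancel hp.ne',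
          Real.rpow_one]
    _ ≤ τ ^ (-s) * (c * M ^ s) := by
        gcongr τ ^ (-s) * (c * ?_)
        exact Real.rpow_le_rpow_of_exponent_ge hM0 (min_le_left _ _) hsp.le
    _ ≤ τ ^ (-s) * (c * (N * τ) ^ s) := by gcongr; exact min_le_right _ _
    _ = c * N ^ s := by
        rw [Real.mul_rpow hN.le hτ.le, Real.rpow_neg hτ.le]
        field_simp

theorem stmt11.{u} (d : ℕ) (hd : 0 < d) (pB : ℝ) (hpB : 1 ≤ pB) :
    (∃ C : ℝ, ∀ (E : Type u) (_ : NormedAddCommGroup E), ∀ (_ : NormedSpace ℝ E),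
      ∀ (m : Fin d → ℕ) (H : (Fin d → ℝ) → E),
      (∀ k : (∀ j, Fin (2 ^ m j)), ∀ w ∈ dyCell m k, ∀ w' ∈ dyCell m k, H w = H w') →
      (∀ w : Fin d → ℝ, (∀ i, w i ∈ Set.Icc (0 : ℝ) 1) → ‖H w‖ ≤ 1) →
      ∀ (j : Fin d) (τ : ℝ), τ ∈ Set.Ioc (0 : ℝ) 1 →
      (∫ w in {w : Fin d → ℝ | (∀ i, w i ∈ Set.Icc (0 : ℝ) 1) ∧
          (∀ i, shiftCoord j τ w i ∈ Set.Icc (0 : ℝ) 1)},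
          ‖H (shiftCoord j τ w) - H w‖ ^ pB)
        ≤ C * min 1 ((2 : ℝ) ^ (m j) * τ)) ∧
    (∀ s : ℝ, 0 < s → s < 1 / pB →
      ∃ C' : ℝ, ∀ (E : Type u) (_ : NormedAddCommGroup E), ∀ (_ : NormedSpace ℝ E),
      ∀ (m : Fin d → ℕ) (H : (Fin d → ℝ) → E),
      (∀ k : (∀ j, Fin (2 ^ m j)), ∀ w ∈ dyCell m k, ∀ w' ∈ dyCell m k, H w = H w') →
      (∀ w : Fin d → ℝ, (∀ i, w i ∈ Set.Icc (0 : ℝ) 1) → ‖H w‖ ≤ 1) →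
      ∀ (j : Fin d) (τ : ℝ), τ ∈ Set.Ioc (0 : ℝ) 1 →
      τ ^ (-s) *
        (∫ w in {w : Fin d → ℝ | (∀ i, w i ∈ Set.Icc (0 : ℝ) 1) ∧
            (∀ i, shiftCoord j τ w i ∈ Set.Icc (0 : ℝ) 1)},
            ‖H (shiftCoord j τ w) - H w‖ ^ pB) ^ (1 / pB)
        ≤ C' * ((2 : ℝ) ^ (m j)) ^ s) := by
  have hpB0 : 0 < pB := one_pos.trans_le hpB
  refine ⟨⟨2 ^ pB, fun E _ _ m H hH hbd j τ hτ =>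
    setIntegral_norm_shiftCoord_sub_rpow_le hpB0 hH hbd j hτ.1.le⟩, fun s hs hsp => ⟨2, ?_⟩⟩
  intro E _ _ m H hH hbd j τ hτ
  exact rpow_neg_mul_rpow_one_div_le hpB0 hs hsp zero_le_two (by positivity) hτ.1
    (integral_nonneg fun _ => by positivity)
    (setIntegral_norm_shiftCoord_sub_rpow_le hpB0 hH hbd j hτ.1.le)
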